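/- arXiv:2201.04543 — 3 statements merged into one kernel-verified Lean document; each statement's English description precedes it below -/
import Mathlib

section
/- Let A, B be n×n Hermitian matrices and X an n×n block-diagonal matrix of the form X = diag([X], 1), where [X] is the upper-left (n-1)×(n-1) block. Set C = A X* B X A. Then C differs from the block-diagonal matrix diag([A][X*][B][X][A], 0) by a matrix of rank at most 6, where [T] denotes the upper-left (n-1)×(n-1) block of T. -/
open Matrix

/-- The upper-left `n × n` block of an `(n+1) × (n+1)` matrix. -/
noncomputable def upperLeftBlock {n : ℕ} (T : Matrix (Fin (n + 1)) (Fin (n + 1)) ℂ) :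
    Matrix (Fin n) (Fin n) ℂ :=
  T.submatrix Fin.castSucc Fin.castSucc

/-- Embed an `n × n` matrix as an `(n+1) × (n+1)` block-diagonal matrix `diag(S, 0)`. -/
noncomputable def blockEmbed {n : ℕ} (S : Matrix (Fin n) (Fin n) ℂ) :
    Matrix (Fin (n + 1)) (Fin (n + 1)) ℂ :=
  (Matrix.fromBlocks S 0 0 0).submatrix finSumFinEquiv.symm finSumFinEquiv.symm

lemma blockEmbed_mul {n : ℕ} (S T : Matrix (Fin n) (Fin n) ℂ) :
    blockEmbed (S * T) = blockEmbed S * blockEmbed T := by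
  unfold blockEmbed
  rw [Matrix.submatrix_mul_equiv, Matrix.fromBlocks_multiply]
  simp

lemma matrix_rank_add_le {m : ℕ} (A B : Matrix (Fin m) (Fin m) ℂ) :
    (A + B).rank ≤ A.rank + B.rank := by
  classical
  rw [Matrix.rank, Matrix.rank, Matrix.rank, Matrix.mulVecLin_add]
  have h : LinearMap.range (A.mulVecLin + B.mulVecLin) ≤
      LinearMap.range A.mulVecLin ⊔ LinearMap.range B.mulVecLin := by
    rintro x ⟨y, rfl⟩
    exact Submodule.add_mem_sup (LinearMap.mem_range_self _ y) (LinearMap.mem_range_self _ y)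
  exact le_trans (Submodule.finrank_mono h)
    (Submodule.finrank_add_le_finrank_add_finrank _ _)

lemma blockEmbed_upperLeftBlock {n : ℕ} (T : Matrix (Fin (n + 1)) (Fin (n + 1)) ℂ) :
    blockEmbed (upperLeftBlock T) =
      blockEmbed (1 : Matrix (Fin n) (Fin n) ℂ) * T *
        blockEmbed (1 : Matrix (Fin n) (Fin n) ℂ) := by
  have hT : T = (T.submatrix (finSumFinEquiv (m := n) (n := 1))
      (finSumFinEquiv (m := n) (n := 1))).submatrix finSumFinEquiv.symm finSumFinEquiv.symm := by
    simp [Matrix.submatrix_submatrix, Equiv.self_comp_symm]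
  conv_rhs => rw [hT]
  unfold blockEmbed
  rw [Matrix.submatrix_mul_equiv, Matrix.submatrix_mul_equiv]
  rw [← Matrix.fromBlocks_toBlocks (T.submatrix finSumFinEquiv finSumFinEquiv),
    Matrix.fromBlocks_multiply, Matrix.fromBlocks_multiply]
  simp only [Matrix.one_mul, Matrix.mul_one, Matrix.zero_mul, Matrix.mul_zero,
    add_zero, zero_add, Matrix.mul_zero]
  have : (T.submatrix finSumFinEquiv finSumFinEquiv).toBlocks₁₁ = upperLeftBlock T := by
    ext i j
    simp [Matrix.toBlocks₁₁, upperLeftBlock, Fin.castSucc]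
  rw [this]

lemma blockEmbed_one_compl {n : ℕ} :
    (1 : Matrix (Fin (n + 1)) (Fin (n + 1)) ℂ) - blockEmbed (1 : Matrix (Fin n) (Fin n) ℂ) =
      Matrix.vecMulVec (Pi.single (Fin.last n) 1) (Pi.single (Fin.last n) 1) := by
  have hcs : ∀ j : Fin n, finSumFinEquiv.symm j.castSucc = Sum.inl j := fun j =>
    finSumFinEquiv_symm_apply_castAdd j
  ext i j
  induction i using Fin.lastCases with
  | last =>
    induction j using Fin.lastCases with
    | last => simp [blockEmbed, Matrix.vecMulVec_apply]
    | cast j =>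
      have h : j.castSucc ≠ Fin.last n := (Fin.castSucc_lt_last j).ne
      simp [blockEmbed, Matrix.vecMulVec_apply, Matrix.one_apply, h, h.symm,
        Pi.single_apply, hcs]
  | cast i =>
    induction j using Fin.lastCases with
    | last =>
      have h : i.castSucc ≠ Fin.last n := (Fin.castSucc_lt_last i).ne
      simp [blockEmbed, Matrix.vecMulVec_apply, Matrix.one_apply, h, h.symm,
        Pi.single_apply, hcs]
    | cast j =>
      have h1 : i.castSucc ≠ Fin.last n := (Fin.castSucc_lt_last i).ne
      have h2 : j.castSucc ≠ Fin.last n := (Fin.castSucc_lt_last j).ne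
      simp [blockEmbed, Matrix.vecMulVec_apply, Matrix.one_apply,
        Pi.single_apply, h1, h2, hcs, Fin.castSucc_inj]

lemma rank_compl_le_one {n : ℕ} :
    ((1 : Matrix (Fin (n + 1)) (Fin (n + 1)) ℂ) -
      blockEmbed (1 : Matrix (Fin n) (Fin n) ℂ)).rank ≤ 1 := by
  rw [blockEmbed_one_compl, Matrix.vecMulVec_eq (Fin 1)]
  refine le_trans (Matrix.rank_mul_le_right _ _) ?_
  simpa using Matrix.rank_le_card_height (Matrix.replicateRow (Fin 1) (Pi.single (Fin.last n) (1 : ℂ)))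

/-- For Hermitian `A, B` and a block-diagonal `X = diag([X], 1)`, the matrix
`C = A X* B X A` differs from `diag([A][X*][B][X][A], 0)` by a matrix of rank at most 6. -/
theorem stmt1 (n : ℕ) (A B X : Matrix (Fin (n + 1)) (Fin (n + 1)) ℂ)
    (hA : A.IsHermitian) (hB : B.IsHermitian)
    (hX1 : X.mulVec (Pi.single (Fin.last n) 1) = Pi.single (Fin.last n) 1)
    (hX2 : Matrix.vecMul (Pi.single (Fin.last n) 1) X = Pi.single (Fin.last n) 1)
    (C : Matrix (Fin (n + 1)) (Fin (n + 1)) ℂ)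
    (hC : C = A * Xᴴ * B * X * A) :
    (C - blockEmbed (upperLeftBlock A * upperLeftBlock Xᴴ * upperLeftBlock B *
      upperLeftBlock X * upperLeftBlock A)).rank ≤ 6 := by
  set P : Matrix (Fin (n + 1)) (Fin (n + 1)) ℂ := blockEmbed 1 with hPdef
  set Q : Matrix (Fin (n + 1)) (Fin (n + 1)) ℂ := 1 - P with hQdef
  have hQrank : Q.rank ≤ 1 := rank_compl_le_one
  have hPP : P * P = P := by rw [hPdef, ← blockEmbed_mul, one_mul]
  have hPP' : ∀ M : Matrix (Fin (n + 1)) (Fin (n + 1)) ℂ, P * (P * M) = P * M := by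
    intro M; rw [← Matrix.mul_assoc, hPP]
  have key : blockEmbed (upperLeftBlock A * upperLeftBlock Xᴴ * upperLeftBlock B *
      upperLeftBlock X * upperLeftBlock A) =
      P * A * P * Xᴴ * P * B * P * X * P * A * P := by
    simp only [blockEmbed_mul, blockEmbed_upperLeftBlock]
    simp only [← hPdef]
    simp only [Matrix.mul_assoc, hPP']
  have hdecomp : C - blockEmbed (upperLeftBlock A * upperLeftBlock Xᴴ * upperLeftBlock B *
      upperLeftBlock X * upperLeftBlock A) =
      Q * (A * Xᴴ * B * X * A) + P * A * (Q * (Xᴴ * B * X * A)) +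
      P * A * P * Xᴴ * (Q * (B * X * A)) + P * A * P * Xᴴ * P * B * (Q * (X * A)) +
      P * A * P * Xᴴ * P * B * P * X * (Q * A) +
      P * A * P * Xᴴ * P * B * P * X * P * A * Q := by
    rw [hC, key, hQdef]
    noncomm_ring
  rw [hdecomp]
  have h1 : ∀ (L R : Matrix (Fin (n + 1)) (Fin (n + 1)) ℂ), (L * (Q * R)).rank ≤ 1 :=
    fun L R => le_trans (Matrix.rank_mul_le_right _ _)
      (le_trans (Matrix.rank_mul_le_left _ _) hQrank)
  have h2 : ∀ (L : Matrix (Fin (n + 1)) (Fin (n + 1)) ℂ), (L * Q).rank ≤ 1 :=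
    fun L => le_trans (Matrix.rank_mul_le_right _ _) hQrank
  have hQA : (Q * (A * Xᴴ * B * X * A)).rank ≤ 1 := by
    have := h1 1 (A * Xᴴ * B * X * A); rwa [Matrix.one_mul] at this
  calc (Q * (A * Xᴴ * B * X * A) + P * A * (Q * (Xᴴ * B * X * A)) +
      P * A * P * Xᴴ * (Q * (B * X * A)) + P * A * P * Xᴴ * P * B * (Q * (X * A)) +
      P * A * P * Xᴴ * P * B * P * X * (Q * A) +
      P * A * P * Xᴴ * P * B * P * X * P * A * Q).rank
      ≤ (Q * (A * Xᴴ * B * X * A) + P * A * (Q * (Xᴴ * B * X * A)) +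
        P * A * P * Xᴴ * (Q * (B * X * A)) + P * A * P * Xᴴ * P * B * (Q * (X * A)) +
        P * A * P * Xᴴ * P * B * P * X * (Q * A)).rank +
        (P * A * P * Xᴴ * P * B * P * X * P * A * Q).rank := matrix_rank_add_le _ _
    _ ≤ _ := by
      refine le_trans (add_le_add (le_trans (matrix_rank_add_le _ _)
        (add_le_add (le_trans (matrix_rank_add_le _ _)
          (add_le_add (le_trans (matrix_rank_add_le _ _)
            (add_le_add (le_trans (matrix_rank_add_le _ _)
              (add_le_add hQA (h1 _ _))) (h1 _ _))) (h1 _ _))) (h1 _ _))) (h2 _)) ?_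
      norm_num
end

section
/- If M and M' are n×n Hermitian matrices with rank(M - M') ≤ r, then for every interval Δ ⊂ ℝ the normalized counting measures of their eigenvalues satisfy |ν_M(Δ) - ν_{M'}(Δ)| ≤ r/n, where ν_A(Δ) = (1/n)·#{eigenvalues of A in Δ, counted with multiplicity}. -/
open scoped Classical

open Matrix Finset

namespace Stmt2Aux

variable {n : ℕ}

/-- Parseval: sum of squared coefficients in an orthonormal basis is the norm squared. -/
lemma sum_sq_inner {E : Type*} [NormedAddCommGroup E] [InnerProductSpace ℂ E]
    {ι : Type*} [Fintype ι] (b : OrthonormalBasis ι ℂ E) (w : E) :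
    ∑ j, ‖(inner ℂ (b j) w : ℂ)‖ ^ 2 = ‖w‖ ^ 2 := by
  have h : ‖b.repr w‖ = ‖w‖ := b.repr.norm_map w
  rw [← h, EuclideanSpace.norm_eq, Real.sq_sqrt (by positivity)]
  simp [OrthonormalBasis.repr_apply_apply]

lemma inner_eigen (N : Matrix (Fin n) (Fin n) ℂ) (hN : N.IsHermitian)
    (v : EuclideanSpace ℂ (Fin n)) (j : Fin n) :
    (inner ℂ (hN.eigenvectorBasis j) (Matrix.toEuclideanLin N v) : ℂ)
      = (hN.eigenvalues j : ℂ) * inner ℂ (hN.eigenvectorBasis j) v := by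
  have hs := (Matrix.isHermitian_iff_isSymmetric.mp hN)
  rw [← hs]
  have hb : Matrix.toEuclideanLin N (hN.eigenvectorBasis j)
      = (hN.eigenvalues j : ℂ) • hN.eigenvectorBasis j := by
    have := hN.mulVec_eigenvectorBasis j
    ext i
    simpa [Matrix.toEuclideanLin_apply] using congrFun this i
  rw [hb, inner_smul_left]
  simp

/-- Coefficient of `(A - c) v` in the eigenbasis. -/
lemma inner_shift (N : Matrix (Fin n) (Fin n) ℂ) (hN : N.IsHermitian)
    (v : EuclideanSpace ℂ (Fin n)) (c : ℝ) (j : Fin n) :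
    (inner ℂ (hN.eigenvectorBasis j) (Matrix.toEuclideanLin N v - (c : ℂ) • v) : ℂ)
      = ((hN.eigenvalues j - c : ℝ) : ℂ) * inner ℂ (hN.eigenvectorBasis j) v := by
  rw [inner_sub_right, inner_smul_right, inner_eigen]
  push_cast
  ring

lemma norm_sq_shift (N : Matrix (Fin n) (Fin n) ℂ) (hN : N.IsHermitian)
    (v : EuclideanSpace ℂ (Fin n)) (c : ℝ) :
    ‖Matrix.toEuclideanLin N v - (c : ℂ) • v‖ ^ 2
      = ∑ j, (hN.eigenvalues j - c) ^ 2 * ‖(inner ℂ (hN.eigenvectorBasis j) v : ℂ)‖ ^ 2 := by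
  rw [← sum_sq_inner hN.eigenvectorBasis]
  refine Finset.sum_congr rfl fun j _ => ?_
  rw [inner_shift]
  rw [norm_mul, mul_pow]
  congr 1
  rw [Complex.norm_real]
  exact sq_abs _

/-- Upper bound: if `v` is supported on eigenvectors with eigenvalues in `[a,b]`, then
`‖(A - c) v‖² ≤ δ² ‖v‖²` with `c = (a+b)/2`, `δ = (b-a)/2`. -/
lemma shift_le (N : Matrix (Fin n) (Fin n) ℂ) (hN : N.IsHermitian)
    (v : EuclideanSpace ℂ (Fin n)) {a b : ℝ} (hab : a ≤ b)
    (hv : ∀ j, hN.eigenvalues j ∉ Set.Icc a b → (inner ℂ (hN.eigenvectorBasis j) v : ℂ) = 0) :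
    ‖Matrix.toEuclideanLin N v - (((a + b) / 2 : ℝ) : ℂ) • v‖ ^ 2
      ≤ ((b - a) / 2) ^ 2 * ‖v‖ ^ 2 := by
  rw [norm_sq_shift, ← sum_sq_inner hN.eigenvectorBasis v, Finset.mul_sum]
  refine Finset.sum_le_sum fun j _ => ?_
  by_cases hj : hN.eigenvalues j ∈ Set.Icc a b
  · refine mul_le_mul_of_nonneg_right ?_ (by positivity)
    obtain ⟨h1, h2⟩ := hj
    have := sq_le_sq' (a := hN.eigenvalues j - (a + b) / 2) (b := (b - a) / 2)
      (by linarith) (by linarith)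
    exact this
  · rw [hv j hj]
    simp

/-- Strict lower bound: if `v ≠ 0` is supported on eigenvectors with eigenvalues outside
`[a,b]`, then `δ² ‖v‖² < ‖(A - c) v‖²`. -/
lemma lt_shift (N : Matrix (Fin n) (Fin n) ℂ) (hN : N.IsHermitian)
    {v : EuclideanSpace ℂ (Fin n)} (hv0 : v ≠ 0) {a b : ℝ} (hab : a ≤ b)
    (hv : ∀ j, hN.eigenvalues j ∈ Set.Icc a b → (inner ℂ (hN.eigenvectorBasis j) v : ℂ) = 0) :
    ((b - a) / 2) ^ 2 * ‖v‖ ^ 2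
      < ‖Matrix.toEuclideanLin N v - (((a + b) / 2 : ℝ) : ℂ) • v‖ ^ 2 := by
  rw [norm_sq_shift, ← sum_sq_inner hN.eigenvectorBasis v, Finset.mul_sum]
  -- find an index where the coefficient is nonzero
  have hvn : ∑ j, ‖(inner ℂ (hN.eigenvectorBasis j) v : ℂ)‖ ^ 2 ≠ 0 := by
    rw [sum_sq_inner]
    exact pow_ne_zero _ (norm_ne_zero_iff.mpr hv0)
  obtain ⟨j₀, -, hj₀⟩ := Finset.exists_ne_zero_of_sum_ne_zero hvn
  have hq₀ : 0 < ‖(inner ℂ (hN.eigenvectorBasis j₀) v : ℂ)‖ ^ 2 :=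
    lt_of_le_of_ne (by positivity) (Ne.symm hj₀)
  have hjo : hN.eigenvalues j₀ ∉ Set.Icc a b := by
    intro h
    exact hj₀ (by rw [hv j₀ h]; simp)
  have key : ∀ j, j ∈ Finset.univ →
      ((b - a) / 2) ^ 2 * ‖(inner ℂ (hN.eigenvectorBasis j) v : ℂ)‖ ^ 2
        ≤ (hN.eigenvalues j - (a + b) / 2) ^ 2 * ‖(inner ℂ (hN.eigenvectorBasis j) v : ℂ)‖ ^ 2 := by
    intro j _
    by_cases hj : hN.eigenvalues j ∈ Set.Icc a b
    · rw [hv j hj]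
      simp
    · refine mul_le_mul_of_nonneg_right (le_of_lt ?_) (by positivity)
      rw [Set.mem_Icc, not_and_or, not_le, not_le] at hj
      rcases hj with hj | hj
      · nlinarith
      · nlinarith
  refine Finset.sum_lt_sum key ⟨j₀, Finset.mem_univ _, ?_⟩
  refine mul_lt_mul_of_pos_right ?_ hq₀
  rw [Set.mem_Icc, not_and_or, not_le, not_le] at hjo
  rcases hjo with hj | hj
  · nlinarith
  · nlinarith

/-- The key counting inequality. -/
lemma count_le (r : ℕ) (M M' : Matrix (Fin n) (Fin n) ℂ)
    (hM : M.IsHermitian) (hM' : M'.IsHermitian)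
    (hrank : (M - M').rank ≤ r) {a b : ℝ} (hab : a ≤ b) :
    (Finset.univ.filter fun i => hM.eigenvalues i ∈ Set.Icc a b).card
      ≤ (Finset.univ.filter fun i => hM'.eigenvalues i ∈ Set.Icc a b).card + r := by
  by_contra hcon
  push_neg at hcon
  set S : Finset (Fin n) := Finset.univ.filter fun i => hM.eigenvalues i ∈ Set.Icc a b with hS
  set S' : Finset (Fin n) := Finset.univ.filter fun i => hM'.eigenvalues i ∈ Set.Icc a b with hS'
  set u := hM.eigenvectorBasis with hu
  set u' := hM'.eigenvectorBasis with hu'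
  -- the three subspaces
  set E : Submodule ℂ (EuclideanSpace ℂ (Fin n)) :=
    (Submodule.span ℂ ((fun j => u j) '' ↑Sᶜ))ᗮ with hE
  set F : Submodule ℂ (EuclideanSpace ℂ (Fin n)) :=
    (Submodule.span ℂ ((fun j => u' j) '' ↑S'))ᗮ with hF
  set K : Submodule ℂ (EuclideanSpace ℂ (Fin n)) :=
    LinearMap.ker (Matrix.toEuclideanLin (M - M')) with hK
  have hNtop : Module.finrank ℂ (EuclideanSpace ℂ (Fin n)) = n := finrank_euclideanSpace_fin
  -- dimension of span of orthonormal vectors over a finset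
  have span_card : ∀ (w : OrthonormalBasis (Fin n) ℂ (EuclideanSpace ℂ (Fin n)))
      (T : Finset (Fin n)),
      Module.finrank ℂ (Submodule.span ℂ ((fun j => w j) '' ↑T)) = T.card := by
    intro w T
    have himg : (fun j => w j) '' ↑T = Set.range (⇑w ∘ (Subtype.val : ↥(↑T : Set (Fin n)) → Fin n)) := by
      rw [Set.range_comp, Subtype.range_coe]
    rw [himg, finrank_span_eq_card
      ((w.orthonormal.comp _ Subtype.val_injective).linearIndependent)]
    simp
  have hEdim : Module.finrank ℂ E + Sᶜ.card = n := by
    have h1 := Submodule.finrank_add_finrank_orthogonal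
      (Submodule.span ℂ ((fun j => u j) '' ↑Sᶜ))
    rw [span_card u Sᶜ, hNtop, ← hE] at h1
    omega
  have hFdim : Module.finrank ℂ F + S'.card = n := by
    have h1 := Submodule.finrank_add_finrank_orthogonal
      (Submodule.span ℂ ((fun j => u' j) '' ↑S'))
    rw [span_card u' S', hNtop, ← hF] at h1
    omega
  have hKdim : n ≤ Module.finrank ℂ K + r := by
    have h1 := LinearMap.finrank_range_add_finrank_ker (Matrix.toEuclideanLin (M - M'))
    rw [hNtop, ← hK] at h1
    have h2 : (M - M').rank
        = Module.finrank ℂ (LinearMap.range (Matrix.toEuclideanLin (M - M'))) := by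
      rw [Matrix.toEuclideanLin_eq_toLin]
      exact Matrix.rank_eq_finrank_range_toLin _ _ _
    omega
  have hScard : S.card + Sᶜ.card = n := by
    have := Finset.card_compl (s := S)
    have := Finset.card_le_univ S
    simp only [Fintype.card_fin] at *
    omega
  -- dim (E ⊓ K) ≥ S.card - r > S'.card
  have hEK : S'.card < Module.finrank ℂ (E ⊓ K : Submodule ℂ (EuclideanSpace ℂ (Fin n))) := by
    have h1 := Submodule.finrank_sup_add_finrank_inf_eq E K
    have h2 : Module.finrank ℂ (E ⊔ K : Submodule ℂ (EuclideanSpace ℂ (Fin n))) ≤ n :=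
      le_trans (Submodule.finrank_le _) (le_of_eq hNtop)
    omega
  have hEKF : 0 < Module.finrank ℂ ((E ⊓ K) ⊓ F : Submodule ℂ (EuclideanSpace ℂ (Fin n))) := by
    have h1 := Submodule.finrank_sup_add_finrank_inf_eq (E ⊓ K) F
    have h2 : Module.finrank ℂ ((E ⊓ K) ⊔ F : Submodule ℂ (EuclideanSpace ℂ (Fin n))) ≤ n :=
      le_trans (Submodule.finrank_le _) (le_of_eq hNtop)
    omega
  -- pick a nonzero vector in the triple intersection
  haveI := Module.finrank_pos_iff.mp hEKF
  obtain ⟨⟨v, hvmem⟩, hvne⟩ :=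
    exists_ne (0 : ((E ⊓ K) ⊓ F : Submodule ℂ (EuclideanSpace ℂ (Fin n))))
  have hv0 : v ≠ 0 := by
    intro h
    exact hvne (Subtype.ext h)
  obtain ⟨⟨hvE, hvK⟩, hvF⟩ := hvmem
  -- coefficients vanish outside S (for M) and on S' (for M')
  have hcoefE : ∀ j, hM.eigenvalues j ∉ Set.Icc a b → (inner ℂ (u j) v : ℂ) = 0 := by
    intro j hj
    have hjS : j ∈ Sᶜ := by
      simp only [hS, Finset.mem_compl, Finset.mem_filter, Finset.mem_univ, true_and]
      exact hj
    exact (Submodule.mem_orthogonal _ v).mp hvE (u j)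
      (Submodule.subset_span ⟨j, Finset.mem_coe.mpr hjS, rfl⟩)
  have hcoefF : ∀ j, hM'.eigenvalues j ∈ Set.Icc a b → (inner ℂ (u' j) v : ℂ) = 0 := by
    intro j hj
    have hjS : j ∈ S' := by
      simp only [hS', Finset.mem_filter, Finset.mem_univ, true_and]
      exact hj
    exact (Submodule.mem_orthogonal _ v).mp hvF (u' j)
      (Submodule.subset_span ⟨j, Finset.mem_coe.mpr hjS, rfl⟩)
  -- (M - c) v = (M' - c) v
  have hMM' : Matrix.toEuclideanLin M v = Matrix.toEuclideanLin M' v := by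
    have : Matrix.toEuclideanLin (M - M') v = 0 := hvK
    rw [map_sub] at this
    have := sub_eq_zero.mp this
    exact this
  have h1 := shift_le M hM v hab hcoefE
  have h2 := lt_shift M' hM' hv0 hab hcoefF
  rw [hMM'] at h1
  exact absurd (lt_of_lt_of_le h2 h1) (lt_irrefl _)

end Stmt2Aux

/-- If `M, M'` are `n × n` Hermitian matrices with `rank (M - M') ≤ r`, then for
every interval `Δ = [a, b]` the normalized counting measures of their eigenvalues differ by at
most `r / n`. -/
theorem stmt2 (n r : ℕ) (hn : 0 < n) (M M' : Matrix (Fin n) (Fin n) ℂ)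
    (hM : M.IsHermitian) (hM' : M'.IsHermitian)
    (hrank : (M - M').rank ≤ r) (a b : ℝ) :
    |((Finset.univ.filter fun i => hM.eigenvalues i ∈ Set.Icc a b).card : ℝ) / n -
      ((Finset.univ.filter fun i => hM'.eigenvalues i ∈ Set.Icc a b).card : ℝ) / n|
      ≤ (r : ℝ) / n := by
  rcases le_or_gt a b with hab | hab
  · have hrank' : (M' - M).rank ≤ r := by
      have hneg : M' - M = -(M - M') := (neg_sub M M').symm
      have heq : (-(M - M')).rank = (M - M').rank := by
        have hr : LinearMap.range (-(M - M')).mulVecLin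
            = LinearMap.range (M - M').mulVecLin := by
          rw [show (-(M - M')).mulVecLin = -((M - M').mulVecLin) by
            ext v i; simp [Matrix.mulVecLin], LinearMap.range_neg]
        unfold Matrix.rank
        rw [hr]
      rw [hneg, heq]
      exact hrank
    have h1 := Stmt2Aux.count_le r M M' hM hM' hrank hab
    have h2 := Stmt2Aux.count_le r M' M hM' hM hrank' hab
    rw [div_sub_div_same, abs_div, abs_of_nonneg (by positivity : (0:ℝ) ≤ (n:ℝ))]
    apply div_le_div_of_nonneg_right ?_ (by positivity)
    · rw [abs_le]
      have c1 := (Nat.cast_le (α := ℝ)).mpr h1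
      have c2 := (Nat.cast_le (α := ℝ)).mpr h2
      push_cast at c1 c2
      constructor <;> linarith
  · have h0 : ∀ x : ℝ, x ∉ Set.Icc a b := fun x hx => absurd (le_trans hx.1 hx.2) (not_le.mpr hab)
    simp only [h0, Finset.filter_false, Finset.card_empty]
    simp
    positivity
end

section
/- Let χ: ℝ → ℝ be bounded with bounded continuous derivative and let a_n → a in ℝ. Let γ_1, γ_2, ... be i.i.d. standard Gaussians, Γ_n = (Σ_{j=1}^n γ_j²)^{1/2}, and ξ_{jn} = γ_j/Γ_n. Then (1/n) Σ_{j=1}^n χ(√n · a_n · ξ_{jn}) → E{χ(aγ)} almost surely as n → ∞, where γ is standard Gaussian. -/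
open MeasureTheory ProbabilityTheory Filter

open scoped ENNReal NNReal Real

section Aux

lemma gauss_eq' : gaussianReal 0 1 = MeasureTheory.volume.withDensity
    (fun x => ((gaussianPDFReal 0 1 x).toNNReal : ℝ≥0∞)) := by
  rw [gaussianReal_of_var_ne_zero 0 one_ne_zero]
  rfl

lemma pdf_eq' (x : ℝ) :
    gaussianPDFReal 0 1 x = (Real.sqrt (2*π))⁻¹ * Real.exp (-(1/2) * x^2) := by
  simp only [gaussianPDFReal, NNReal.coe_one, mul_one, sub_zero]
  ring_nf

lemma gauss_integral' (f : ℝ → ℝ) :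
    ∫ x, f x ∂(gaussianReal 0 1) = ∫ x, gaussianPDFReal 0 1 x * f x := by
  rw [gauss_eq', integral_withDensity_eq_integral_smul
    ((measurable_gaussianPDFReal 0 1).real_toNNReal)]
  congr 1; ext x
  simp [NNReal.smul_def, Real.coe_toNNReal _ (gaussianPDFReal_nonneg 0 1 x)]

lemma gauss_integrable' (f : ℝ → ℝ)
    (h : Integrable (fun x => gaussianPDFReal 0 1 x * f x)) :
    Integrable f (gaussianReal 0 1) := by
  rw [gauss_eq', integrable_withDensity_iff_integrable_coe_smul
    ((measurable_gaussianPDFReal 0 1).real_toNNReal)]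
  apply h.congr
  filter_upwards with x
  simp [NNReal.smul_def, Real.coe_toNNReal _ (gaussianPDFReal_nonneg 0 1 x)]

lemma base_sq' : Integrable (fun x : ℝ => x ^ 2 * Real.exp (-(1/2) * x^2)) := by
  have h := integrable_rpow_mul_exp_neg_mul_sq (b := 1/2) (by norm_num) (s := 2) (by norm_num)
  apply h.congr
  filter_upwards with x
  rw [show (2:ℝ) = ((2:ℕ):ℝ) by norm_num, Real.rpow_natCast]

lemma base_abs' : Integrable (fun x : ℝ => |x| * Real.exp (-(1/2) * x^2)) := by
  have h := (integrable_mul_exp_neg_mul_sq (b := 1/2) (by norm_num)).abs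
  apply h.congr
  filter_upwards with x
  rw [abs_mul, abs_of_pos (Real.exp_pos _)]

lemma int_sq' : Integrable (fun x : ℝ => gaussianPDFReal 0 1 x * x ^ 2) := by
  apply (base_sq'.const_mul (Real.sqrt (2*π))⁻¹).congr
  filter_upwards with x
  rw [pdf_eq']; ring

lemma int_abs' : Integrable (fun x : ℝ => gaussianPDFReal 0 1 x * |x|) := by
  apply (base_abs'.const_mul (Real.sqrt (2*π))⁻¹).congr
  filter_upwards with x
  rw [pdf_eq']; ring

lemma moment2' : ∫ x, x ^ 2 ∂(gaussianReal 0 1) = 1 := by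
  rw [gauss_integral']
  have h1 : ∫ x : ℝ, gaussianPDFReal 0 1 x * x ^ 2
      = (Real.sqrt (2*π))⁻¹ * ∫ x : ℝ, x ^ 2 * Real.exp (-(1/2) * x^2) := by
    rw [← integral_const_mul]
    congr 1; ext x; rw [pdf_eq']; ring
  have h2 : ∫ x : ℝ, x ^ 2 * Real.exp (-(1/2) * x^2)
      = 2 * ∫ x in Set.Ioi (0:ℝ), x ^ 2 * Real.exp (-(1/2) * x^2) := by
    rw [← integral_comp_abs (f := fun x => x ^ 2 * Real.exp (-(1/2) * x^2))]
    congr 1; ext x; rw [sq_abs]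
  have h3 : ∫ x in Set.Ioi (0:ℝ), x ^ 2 * Real.exp (-(1/2) * x^2)
      = ((1:ℝ)/2) ^ (-((2:ℝ)+1)/2) * (1/2) * Real.Gamma (((2:ℝ)+1)/2) := by
    rw [← integral_rpow_mul_exp_neg_mul_rpow (p := 2) (q := 2) (by norm_num) (by norm_num)
      (by norm_num)]
    have e : ∀ y : ℝ, y ^ (2:ℝ) = y ^ (2:ℕ) := fun y => by
      rw [show (2:ℝ) = ((2:ℕ):ℝ) by norm_num, Real.rpow_natCast]
    refine setIntegral_congr_fun measurableSet_Ioi (fun x hx => ?_)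
    simp only [e]
  have hg : Real.Gamma (((2:ℝ)+1)/2) = Real.sqrt π / 2 := by
    rw [show ((2:ℝ)+1)/2 = 1/2 + 1 by ring, Real.Gamma_add_one (by norm_num),
      Real.Gamma_one_half_eq]
    ring
  have hp : ((1:ℝ)/2) ^ (-((2:ℝ)+1)/2) = 2 * Real.sqrt 2 := by
    rw [show (-((2:ℝ)+1)/2) = -(3/2) by ring, Real.rpow_neg (by norm_num),
      show ((1:ℝ)/2) = 2⁻¹ by norm_num, Real.inv_rpow (by norm_num), inv_inv,
      show (3/2 : ℝ) = 1 + 1/2 by ring, Real.rpow_add (by norm_num), Real.rpow_one,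
      ← Real.sqrt_eq_rpow]
  rw [h1, h2, h3, hg, hp, Real.sqrt_mul (by norm_num)]
  have h2pos : (0:ℝ) < Real.sqrt 2 := Real.sqrt_pos.mpr (by norm_num)
  have hppos : (0:ℝ) < Real.sqrt π := Real.sqrt_pos.mpr Real.pi_pos
  field_simp

lemma slln_comp' {Ω : Type*} [MeasurableSpace Ω] (P : Measure Ω) [IsProbabilityMeasure P]
    (γ : ℕ → Ω → ℝ) (hmeas : ∀ j, Measurable (γ j))
    (hindep : iIndepFun γ P)
    (hdist : ∀ j, P.map (γ j) = gaussianReal 0 1)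
    (f : ℝ → ℝ) (hfm : Measurable f) (hfi : Integrable f (gaussianReal 0 1)) :
    ∀ᵐ ω ∂P, Tendsto (fun n : ℕ => (∑ j ∈ Finset.range n, f (γ j ω)) / n) atTop
      (nhds (∫ x, f x ∂(gaussianReal 0 1))) := by
  have hident : ∀ i, IdentDistrib (fun ω => f (γ i ω)) (fun ω => f (γ 0 ω)) P P := by
    intro i
    exact IdentDistrib.comp ⟨(hmeas i).aemeasurable, (hmeas 0).aemeasurable,
      by rw [hdist i, hdist 0]⟩ hfm
  have hindep' : Pairwise (Function.onFun (IndepFun · · P) fun i ω => f (γ i ω)) :=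
    fun i j hij => (hindep.indepFun hij).comp hfm hfm
  have hint : Integrable (fun ω => f (γ 0 ω)) P := by
    rw [← hdist 0] at hfi
    exact (integrable_map_measure hfm.aestronglyMeasurable (hmeas 0).aemeasurable).mp hfi
  have h := strong_law_ae_real (fun i ω => f (γ i ω)) hint hindep' hident
  have heq : (∫ ω, f (γ 0 ω) ∂P) = ∫ x, f x ∂(gaussianReal 0 1) := by
    rw [← hdist 0, integral_map (hmeas 0).aemeasurable hfm.aestronglyMeasurable]
  rw [heq] at h
  exact h

end Aux

/-- Let `χ` be bounded with bounded continuous derivative, `a_n → a`,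
`γ_j` i.i.d. standard Gaussians, `Γ_n = (Σ_{j<n} γ_j²)^{1/2}` and `ξ_{jn} = γ_j / Γ_n`.
Then `(1/n) Σ_{j<n} χ(√n a_n ξ_{jn}) → E χ(a γ)` almost surely. -/
theorem stmt13 {Ω : Type*} [MeasurableSpace Ω] (P : Measure Ω) [IsProbabilityMeasure P]
    (γ : ℕ → Ω → ℝ) (hmeas : ∀ j, Measurable (γ j))
    (hindep : iIndepFun γ P)
    (hdist : ∀ j, P.map (γ j) = gaussianReal 0 1)
    (χ χ' : ℝ → ℝ) (hd : ∀ x, HasDerivAt χ (χ' x) x) (hcont : Continuous χ')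
    (C : ℝ) (hχb : ∀ x, |χ x| ≤ C) (hχ'b : ∀ x, |χ' x| ≤ C)
    (a : ℝ) (aseq : ℕ → ℝ) (ha : Tendsto aseq atTop (nhds a)) :
    ∀ᵐ ω ∂P, Tendsto
      (fun n : ℕ => (1 / (n : ℝ)) * ∑ j ∈ Finset.range n,
        χ (Real.sqrt n * aseq n *
          (γ j ω / Real.sqrt (∑ i ∈ Finset.range n, γ i ω ^ 2))))
      atTop (nhds (∫ t, χ (a * t) ∂(gaussianReal 0 1))) := by
  have hχc : Continuous χ := continuous_iff_continuousAt.mpr fun x => (hd x).continuousAt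
  have hlip : ∀ x y : ℝ, |χ x - χ y| ≤ C * |x - y| := by
    intro x y
    have := Convex.norm_image_sub_le_of_norm_hasDerivWithin_le
      (f := χ) (f' := χ') (s := Set.univ)
      (fun z _ => (hd z).hasDerivWithinAt) (fun z _ => by
        rw [Real.norm_eq_abs]; exact hχ'b z)
      convex_univ (Set.mem_univ y) (Set.mem_univ x)
    simpa [Real.norm_eq_abs] using this
  have h1 := slln_comp' P γ hmeas hindep hdist (fun x => x ^ 2) (by fun_prop)
    (gauss_integrable' _ int_sq')
  rw [moment2'] at h1
  have h2 := slln_comp' P γ hmeas hindep hdist (fun x => |x|) (by fun_prop)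
    (gauss_integrable' _ int_abs')
  have hint3 : Integrable (fun x => χ (a * x)) (gaussianReal 0 1) := by
    refine Integrable.mono' (integrable_const C)
      ((hχc.comp (continuous_const.mul continuous_id)).aestronglyMeasurable) ?_
    filter_upwards with x
    rw [Real.norm_eq_abs]; exact hχb _
  have h3 := slln_comp' P γ hmeas hindep hdist (fun x => χ (a * x))
    ((hχc.comp (continuous_const.mul continuous_id)).measurable) hint3
  filter_upwards [h1, h2, h3] with ω H1 H2 H3
  set S : ℕ → ℝ := fun n => ∑ i ∈ Finset.range n, γ i ω ^ 2 with hS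
  set b : ℕ → ℝ := fun n => aseq n * (Real.sqrt n / Real.sqrt (S n)) with hb'
  have h0 : Tendsto (fun n : ℕ => (n : ℝ) / S n) atTop (nhds 1) := by
    have := H1.inv₀ one_ne_zero
    simpa [inv_div] using this
  have hsq : Tendsto (fun n : ℕ => Real.sqrt (n : ℝ) / Real.sqrt (S n)) atTop (nhds 1) := by
    have ht := (Real.continuous_sqrt.tendsto 1).comp h0
    rw [Real.sqrt_one] at ht
    exact ht.congr fun n => Real.sqrt_div (Nat.cast_nonneg n) _
  have hb : Tendsto b atTop (nhds a) := by
    have := ha.mul hsq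
    simpa using this
  have hkey : ∀ (n : ℕ) (j : ℕ),
      Real.sqrt n * aseq n * (γ j ω / Real.sqrt (S n)) = b n * γ j ω := by
    intro n j
    simp only [hb']
    ring
  have H3' : Tendsto (fun n : ℕ => (1 / (n : ℝ)) * ∑ j ∈ Finset.range n, χ (a * γ j ω))
      atTop (nhds (∫ t, χ (a * t) ∂(gaussianReal 0 1))) :=
    H3.congr (fun n => by ring)
  have hdiff : Tendsto (fun n : ℕ =>
      (1 / (n : ℝ)) * ∑ j ∈ Finset.range n, χ (b n * γ j ω)
      - (1 / (n : ℝ)) * ∑ j ∈ Finset.range n, χ (a * γ j ω)) atTop (nhds 0) := by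
    apply squeeze_zero_norm
      (a := fun n : ℕ => (C * |b n - a|) * ((∑ j ∈ Finset.range n, |γ j ω|) / n))
    · intro n
      have hn : (0:ℝ) ≤ 1 / (n : ℝ) := by positivity
      have habs : |∑ j ∈ Finset.range n, (χ (b n * γ j ω) - χ (a * γ j ω))|
          ≤ ∑ j ∈ Finset.range n, (C * |b n - a|) * |γ j ω| := by
        refine (Finset.abs_sum_le_sum_abs _ _).trans (Finset.sum_le_sum fun j _ => ?_)
        calc |χ (b n * γ j ω) - χ (a * γ j ω)| ≤ C * |b n * γ j ω - a * γ j ω| := hlip _ _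
          _ = (C * |b n - a|) * |γ j ω| := by rw [← sub_mul, abs_mul]; ring
      rw [← mul_sub, ← Finset.sum_sub_distrib, Real.norm_eq_abs, abs_mul, abs_of_nonneg hn]
      calc (1 / (n : ℝ)) * |∑ j ∈ Finset.range n, (χ (b n * γ j ω) - χ (a * γ j ω))|
          ≤ (1 / (n : ℝ)) * ∑ j ∈ Finset.range n, (C * |b n - a|) * |γ j ω| :=
            mul_le_mul_of_nonneg_left habs hn
        _ = (C * |b n - a|) * ((∑ j ∈ Finset.range n, |γ j ω|) / n) := by
            rw [← Finset.mul_sum]; ring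
    · have := ((hb.sub (tendsto_const_nhds (x := a))).abs.const_mul C).mul H2
      simpa using this
  have Hb : Tendsto (fun n : ℕ => (1 / (n : ℝ)) * ∑ j ∈ Finset.range n, χ (b n * γ j ω))
      atTop (nhds (∫ t, χ (a * t) ∂(gaussianReal 0 1))) := by
    have := hdiff.add H3'
    simpa using this
  refine Hb.congr (fun n => ?_)
  congr 1
  exact Finset.sum_congr rfl fun j _ => by rw [(hkey n j).symm]
end
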